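/- Let κ ≥ 0 and m ≥ 0. There exist α > 0 and ω ∈ ℝ, with ω > 0 whenever κ² < 4m, such that for every smooth compactly supported function x : ℝ → ℝ: ∫_ℝ (−x''(ζ) + m·x(ζ))·x(ζ)·e^{−κ|ζ|} dζ ≥ α ∫_ℝ (x'(ζ)² + m·x(ζ)²)·e^{−κ|ζ|} dζ + ω ∫_ℝ x(ζ)²·e^{−κ|ζ|} dζ. -/

import Mathlib

open MeasureTheory Filter Topology

noncomputable section

/-- Pointwise AM-GM estimate. -/
lemma stmt15_ptwise (c κ m a b : ℝ) (hc : 0 < c) :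
    (1 - c) * (a ^ 2 + m * b ^ 2) + (c * m - κ ^ 2 / (4 * c)) * b ^ 2 + κ * a * b
      ≤ a ^ 2 + m * b ^ 2 := by
  have h1 : κ * a * b - c * a ^ 2 ≤ κ ^ 2 / (4 * c) * b ^ 2 := by
    rw [div_mul_eq_mul_div, le_div_iff₀ (by positivity : (0:ℝ) < 4 * c)]
    nlinarith [sq_nonneg (2 * c * a - κ * b)]
  nlinarith [h1]

theorem statement15 (κ m : ℝ) (hκ : 0 ≤ κ) (hm : 0 ≤ m) :
    ∃ α ω : ℝ, 0 < α ∧ (κ ^ 2 < 4 * m → 0 < ω) ∧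
      ∀ x : ℝ → ℝ, ContDiff ℝ (⊤ : ℕ∞) x → HasCompactSupport x →
        α * (∫ ζ : ℝ, ((deriv x ζ) ^ 2 + m * (x ζ) ^ 2) * Real.exp (-κ * |ζ|)) +
            ω * (∫ ζ : ℝ, (x ζ) ^ 2 * Real.exp (-κ * |ζ|)) ≤
          ∫ ζ : ℝ, (-(deriv (deriv x) ζ) + m * x ζ) * x ζ * Real.exp (-κ * |ζ|) := by
  classical
  set s : ℝ := if κ ^ 2 < 4 * m then (κ ^ 2 / (4 * m) + 1) / 2 else 1 / 4 with hs_def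
  have hs_pos : 0 < s := by
    rw [hs_def]
    split_ifs with h
    · have hm' : 0 < m := by nlinarith [sq_nonneg κ]
      positivity
    · norm_num
  have hs_lt : s < 1 := by
    rw [hs_def]
    split_ifs with h
    · have hm' : 0 < m := by nlinarith [sq_nonneg κ]
      have : κ ^ 2 / (4 * m) < 1 := (div_lt_one (by positivity)).mpr h
      linarith
    · norm_num
  set c : ℝ := Real.sqrt s with hc_def
  have hc_pos : 0 < c := Real.sqrt_pos.mpr hs_pos
  have hc_lt : c < 1 := by
    rw [hc_def]
    calc Real.sqrt s < Real.sqrt 1 := by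
          exact Real.sqrt_lt_sqrt hs_pos.le hs_lt
      _ = 1 := Real.sqrt_one
  have hc_sq : c ^ 2 = s := Real.sq_sqrt hs_pos.le
  refine ⟨1 - c, c * m - κ ^ 2 / (4 * c), by linarith, ?_, ?_⟩
  · intro h
    have hm' : 0 < m := by nlinarith [sq_nonneg κ]
    have hsval : s = (κ ^ 2 / (4 * m) + 1) / 2 := by rw [hs_def, if_pos h]
    have h4 : 4 * c * (c * m - κ ^ 2 / (4 * c)) = 4 * s * m - κ ^ 2 := by
      field_simp
      nlinarith [hc_sq]
    have : 0 < 4 * s * m - κ ^ 2 := by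
      rw [hsval]
      have : 4 * ((κ ^ 2 / (4 * m) + 1) / 2) * m = (κ ^ 2 + 4 * m) / 2 := by field_simp
      rw [this]; linarith
    nlinarith [hc_pos]
  intro x hxC hxS
  -- notation
  set u : ℝ → ℝ := deriv x with hu_def
  set v : ℝ → ℝ := deriv u with hv_def
  have hxCi : ContDiff ℝ ((⊤ : ℕ∞) : WithTop ℕ∞) x := hxC.of_le (by simp)
  have hxC' : ContDiff ℝ ((⊤ : ℕ∞) : WithTop ℕ∞) u := (contDiff_infty_iff_deriv.mp hxCi).2
  have hxC'' : ContDiff ℝ ((⊤ : ℕ∞) : WithTop ℕ∞) v := (contDiff_infty_iff_deriv.mp hxC').2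
  have hcx : Continuous x := hxC.continuous
  have hcu : Continuous u := hxC'.continuous
  have hcv : Continuous v := hxC''.continuous
  have huS : HasCompactSupport u := hxS.deriv
  have hvS : HasCompactSupport v := huS.deriv
  -- a compact set outside which everything vanishes
  set K : Set ℝ := tsupport x ∪ tsupport u ∪ tsupport v with hK_def
  have hKc : IsCompact K := (hxS.union huS).union hvS
  have hvanish : ∀ ζ ∉ K, x ζ = 0 ∧ u ζ = 0 ∧ v ζ = 0 := by
    intro ζ hζ
    simp only [hK_def, Set.mem_union, not_or] at hζ
    exact ⟨image_eq_zero_of_notMem_tsupport hζ.1.1, image_eq_zero_of_notMem_tsupport hζ.1.2,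
      image_eq_zero_of_notMem_tsupport hζ.2⟩
  have hcs : ∀ f : ℝ → ℝ, (∀ ζ, x ζ = 0 → u ζ = 0 → v ζ = 0 → f ζ = 0) →
      HasCompactSupport f := by
    intro f hf
    exact HasCompactSupport.intro hKc fun ζ hζ => by
      obtain ⟨h1, h2, h3⟩ := hvanish ζ hζ; exact hf ζ h1 h2 h3
  -- weights
  have hwc : Continuous fun ζ : ℝ => Real.exp (-κ * |ζ|) := by fun_prop
  have hwpc : Continuous fun ζ : ℝ => Real.exp (-κ * ζ) := by fun_prop
  have hwmc : Continuous fun ζ : ℝ => Real.exp (κ * ζ) := by fun_prop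
  -- integrability helper
  have hint : ∀ f : ℝ → ℝ, Continuous f →
      (∀ ζ, x ζ = 0 → u ζ = 0 → v ζ = 0 → f ζ = 0) → Integrable f :=
    fun f hf h => hf.integrable_of_hasCompactSupport (hcs f h)
  -- derivatives
  have hdx : ∀ ζ, HasDerivAt x (u ζ) ζ := fun ζ => (hxC.differentiable (by simp) ζ).hasDerivAt
  have hdu : ∀ ζ, HasDerivAt u (v ζ) ζ := fun ζ => (hxC'.differentiable (by simp) ζ).hasDerivAt
  have hep : ∀ ζ : ℝ, HasDerivAt (fun ζ : ℝ => Real.exp (-κ * ζ))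
      (Real.exp (-κ * ζ) * (-κ)) ζ := by
    intro ζ
    simpa using ((hasDerivAt_id ζ).const_mul (-κ)).exp
  have hem : ∀ ζ : ℝ, HasDerivAt (fun ζ : ℝ => Real.exp (κ * ζ))
      (Real.exp (κ * ζ) * κ) ζ := by
    intro ζ
    simpa using ((hasDerivAt_id ζ).const_mul κ).exp
  have hFd : ∀ ζ : ℝ, HasDerivAt (fun ζ => u ζ * x ζ * Real.exp (-κ * ζ))
      ((v ζ * x ζ + u ζ ^ 2 - κ * (u ζ * x ζ)) * Real.exp (-κ * ζ)) ζ := by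
    intro ζ
    have := ((hdu ζ).mul (hdx ζ)).mul (hep ζ)
    exact this.congr_deriv (by simp only [Pi.mul_apply]; ring)
  have hGd : ∀ ζ : ℝ, HasDerivAt (fun ζ => u ζ * x ζ * Real.exp (κ * ζ))
      ((v ζ * x ζ + u ζ ^ 2 + κ * (u ζ * x ζ)) * Real.exp (κ * ζ)) ζ := by
    intro ζ
    have := ((hdu ζ).mul (hdx ζ)).mul (hem ζ)
    exact this.congr_deriv (by simp only [Pi.mul_apply]; ring)
  -- integrable functions
  have hIF' : Integrable fun ζ => (v ζ * x ζ + u ζ ^ 2 - κ * (u ζ * x ζ)) * Real.exp (-κ * ζ) := by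
    refine hint _ (by fun_prop) ?_
    intro ζ h1 h2 h3; simp [h1, h2, h3]
  have hIG' : Integrable fun ζ => (v ζ * x ζ + u ζ ^ 2 + κ * (u ζ * x ζ)) * Real.exp (κ * ζ) := by
    refine hint _ (by fun_prop) ?_
    intro ζ h1 h2 h3; simp [h1, h2, h3]
  have hIgp : Integrable fun ζ => (u ζ ^ 2 + m * x ζ ^ 2 - κ * (u ζ * x ζ)) * Real.exp (-κ * ζ) := by
    refine hint _ (by fun_prop) ?_
    intro ζ h1 h2 h3; simp [h1, h2, h3]
  have hIgm : Integrable fun ζ => (u ζ ^ 2 + m * x ζ ^ 2 + κ * (u ζ * x ζ)) * Real.exp (κ * ζ) := by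
    refine hint _ (by fun_prop) ?_
    intro ζ h1 h2 h3; simp [h1, h2, h3]
  have hII : Integrable fun ζ => (-(v ζ) + m * x ζ) * x ζ * Real.exp (-κ * |ζ|) := by
    refine hint _ (by fun_prop) ?_
    intro ζ h1 h2 h3; simp [h1, h2, h3]
  have hID : Integrable fun ζ => (u ζ ^ 2 + m * x ζ ^ 2) * Real.exp (-κ * |ζ|) := by
    refine hint _ (by fun_prop) ?_
    intro ζ h1 h2 h3; simp [h1, h2, h3]
  have hIN : Integrable fun ζ => x ζ ^ 2 * Real.exp (-κ * |ζ|) := by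
    refine hint _ (by fun_prop) ?_
    intro ζ h1 h2 h3; simp [h1, h3]
  -- limits at infinity
  have hFsupp : HasCompactSupport fun ζ => u ζ * x ζ * Real.exp (-κ * ζ) := by
    refine hcs _ ?_
    intro ζ h1 h2 h3; simp [h1, h2]
  have hGsupp : HasCompactSupport fun ζ => u ζ * x ζ * Real.exp (κ * ζ) := by
    refine hcs _ ?_
    intro ζ h1 h2 h3; simp [h1, h2]
  have hF0 : Tendsto (fun ζ => u ζ * x ζ * Real.exp (-κ * ζ)) atTop (𝓝 0) := by
    obtain ⟨R, hRpos, hR⟩ := hFsupp.exists_pos_le_norm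
    refine Tendsto.congr' ?_ tendsto_const_nhds
    filter_upwards [eventually_ge_atTop R] with ζ hζ
    exact (hR ζ (by rw [Real.norm_eq_abs, abs_of_pos (lt_of_lt_of_le hRpos hζ)]; exact hζ)).symm
  have hG0 : Tendsto (fun ζ => u ζ * x ζ * Real.exp (κ * ζ)) atBot (𝓝 0) := by
    obtain ⟨R, hRpos, hR⟩ := hGsupp.exists_pos_le_norm
    refine Tendsto.congr' ?_ tendsto_const_nhds
    filter_upwards [eventually_le_atBot (-R)] with ζ hζ
    refine (hR ζ ?_).symm
    rw [Real.norm_eq_abs, abs_of_neg (by linarith)]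
    linarith
  -- integration by parts on each half line
  have hIBPp : ∫ ζ in Set.Ioi (0:ℝ), (v ζ * x ζ + u ζ ^ 2 - κ * (u ζ * x ζ)) * Real.exp (-κ * ζ)
      = 0 - u 0 * x 0 * Real.exp (-κ * 0) := by
    have := integral_Ioi_of_hasDerivAt_of_tendsto' (a := 0) (f := fun ζ => u ζ * x ζ * Real.exp (-κ * ζ))
      (fun ζ _ => hFd ζ) hIF'.integrableOn hF0
    simpa using this
  have hIBPm : ∫ ζ in Set.Iic (0:ℝ), (v ζ * x ζ + u ζ ^ 2 + κ * (u ζ * x ζ)) * Real.exp (κ * ζ)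
      = u 0 * x 0 * Real.exp (κ * 0) - 0 := by
    have := integral_Iic_of_hasDerivAt_of_tendsto' (a := 0) (f := fun ζ => u ζ * x ζ * Real.exp (κ * ζ))
      (fun ζ _ => hGd ζ) hIG'.integrableOn hG0
    simpa using this
  -- decompose the main integral
  have hsplit : (∫ ζ : ℝ, (-(v ζ) + m * x ζ) * x ζ * Real.exp (-κ * |ζ|))
      = (∫ ζ in Set.Iic (0:ℝ), (u ζ ^ 2 + m * x ζ ^ 2 + κ * (u ζ * x ζ)) * Real.exp (κ * ζ))
        + ∫ ζ in Set.Ioi (0:ℝ), (u ζ ^ 2 + m * x ζ ^ 2 - κ * (u ζ * x ζ)) * Real.exp (-κ * ζ) := by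
    rw [← intervalIntegral.integral_Iic_add_Ioi hII.integrableOn hII.integrableOn]
    have hpos : ∫ ζ in Set.Ioi (0:ℝ), (-(v ζ) + m * x ζ) * x ζ * Real.exp (-κ * |ζ|)
        = ∫ ζ in Set.Ioi (0:ℝ), ((u ζ ^ 2 + m * x ζ ^ 2 - κ * (u ζ * x ζ)) * Real.exp (-κ * ζ)
            - (v ζ * x ζ + u ζ ^ 2 - κ * (u ζ * x ζ)) * Real.exp (-κ * ζ)) := by
      refine setIntegral_congr_fun measurableSet_Ioi fun ζ hζ => ?_
      rw [abs_of_pos (Set.mem_Ioi.mp hζ)]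
      ring
    have hneg : ∫ ζ in Set.Iic (0:ℝ), (-(v ζ) + m * x ζ) * x ζ * Real.exp (-κ * |ζ|)
        = ∫ ζ in Set.Iic (0:ℝ), ((u ζ ^ 2 + m * x ζ ^ 2 + κ * (u ζ * x ζ)) * Real.exp (κ * ζ)
            - (v ζ * x ζ + u ζ ^ 2 + κ * (u ζ * x ζ)) * Real.exp (κ * ζ)) := by
      refine setIntegral_congr_fun measurableSet_Iic fun ζ hζ => ?_
      rw [abs_of_nonpos (Set.mem_Iic.mp hζ)]
      ring_nf
    rw [hpos, hneg,
      integral_sub hIgp.integrableOn hIF'.integrableOn,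
      integral_sub hIgm.integrableOn hIG'.integrableOn,
      hIBPp, hIBPm]
    simp [Real.exp_zero]
  rw [hsplit]
  -- rewrite the left-hand side as a single integral and split it
  have hT : Integrable fun ζ => (1 - c) * ((u ζ ^ 2 + m * x ζ ^ 2) * Real.exp (-κ * |ζ|))
      + (c * m - κ ^ 2 / (4 * c)) * (x ζ ^ 2 * Real.exp (-κ * |ζ|)) := by
    refine hint _ (by fun_prop) ?_
    intro ζ h1 h2 h3; simp [h1, h2, h3]
  rw [← integral_const_mul, ← integral_const_mul,
    ← integral_add (hID.const_mul (1 - c)) (hIN.const_mul (c * m - κ ^ 2 / (4 * c))),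
    ← intervalIntegral.integral_Iic_add_Ioi
      (f := fun ζ => (1 - c) * ((u ζ ^ 2 + m * x ζ ^ 2) * Real.exp (-κ * |ζ|))
        + (c * m - κ ^ 2 / (4 * c)) * (x ζ ^ 2 * Real.exp (-κ * |ζ|)))
      hT.integrableOn hT.integrableOn]
  have hmono_p : (∫ ζ in Set.Ioi (0:ℝ), ((1 - c) * ((u ζ ^ 2 + m * x ζ ^ 2) * Real.exp (-κ * |ζ|))
        + (c * m - κ ^ 2 / (4 * c)) * (x ζ ^ 2 * Real.exp (-κ * |ζ|))))
      ≤ ∫ ζ in Set.Ioi (0:ℝ), (u ζ ^ 2 + m * x ζ ^ 2 - κ * (u ζ * x ζ)) * Real.exp (-κ * ζ) := by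
    refine setIntegral_mono_on hT.integrableOn hIgp.integrableOn
      measurableSet_Ioi fun ζ hζ => ?_
    rw [abs_of_pos (Set.mem_Ioi.mp hζ)]
    have h := stmt15_ptwise c κ m (u ζ) (x ζ) hc_pos
    have he := Real.exp_nonneg (-κ * ζ)
    have h2 : (1 - c) * (u ζ ^ 2 + m * x ζ ^ 2) + (c * m - κ ^ 2 / (4 * c)) * x ζ ^ 2
        ≤ u ζ ^ 2 + m * x ζ ^ 2 - κ * (u ζ * x ζ) := by linarith
    calc (1 - c) * ((u ζ ^ 2 + m * x ζ ^ 2) * Real.exp (-κ * ζ))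
          + (c * m - κ ^ 2 / (4 * c)) * (x ζ ^ 2 * Real.exp (-κ * ζ))
        = ((1 - c) * (u ζ ^ 2 + m * x ζ ^ 2)
            + (c * m - κ ^ 2 / (4 * c)) * x ζ ^ 2) * Real.exp (-κ * ζ) := by ring
      _ ≤ (u ζ ^ 2 + m * x ζ ^ 2 - κ * (u ζ * x ζ)) * Real.exp (-κ * ζ) :=
          mul_le_mul_of_nonneg_right h2 he
  have hmono_m : (∫ ζ in Set.Iic (0:ℝ), ((1 - c) * ((u ζ ^ 2 + m * x ζ ^ 2) * Real.exp (-κ * |ζ|))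
        + (c * m - κ ^ 2 / (4 * c)) * (x ζ ^ 2 * Real.exp (-κ * |ζ|))))
      ≤ ∫ ζ in Set.Iic (0:ℝ), (u ζ ^ 2 + m * x ζ ^ 2 + κ * (u ζ * x ζ)) * Real.exp (κ * ζ) := by
    refine setIntegral_mono_on hT.integrableOn hIgm.integrableOn
      measurableSet_Iic fun ζ hζ => ?_
    rw [abs_of_nonpos (Set.mem_Iic.mp hζ)]
    have h := stmt15_ptwise c κ m (u ζ) (-(x ζ)) hc_pos
    simp only [neg_sq] at h
    have he := Real.exp_nonneg (κ * ζ)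
    have hww : -κ * -ζ = κ * ζ := by ring
    rw [hww]
    have h2 : (1 - c) * (u ζ ^ 2 + m * x ζ ^ 2) + (c * m - κ ^ 2 / (4 * c)) * x ζ ^ 2
        ≤ u ζ ^ 2 + m * x ζ ^ 2 + κ * (u ζ * x ζ) := by nlinarith [h]
    calc (1 - c) * ((u ζ ^ 2 + m * x ζ ^ 2) * Real.exp (κ * ζ))
          + (c * m - κ ^ 2 / (4 * c)) * (x ζ ^ 2 * Real.exp (κ * ζ))
        = ((1 - c) * (u ζ ^ 2 + m * x ζ ^ 2)
            + (c * m - κ ^ 2 / (4 * c)) * x ζ ^ 2) * Real.exp (κ * ζ) := by ring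
      _ ≤ (u ζ ^ 2 + m * x ζ ^ 2 + κ * (u ζ * x ζ)) * Real.exp (κ * ζ) :=
          mul_le_mul_of_nonneg_right h2 he
  exact add_le_add hmono_m hmono_p

end
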